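/- arXiv:2107.03682 — 3 statements merged into one kernel-verified Lean document; each statement's English description precedes it below -/
import Mathlib

section
/- In the free group F(u,v) with B = uvuv⁻¹, for all nonzero integers k and l, the element Q_{k,l} = u^k v^{2l+1} u^k v^{-(2l+1)} satisfies Q_{k,l} = O_{l,k}⁻¹ · (∏_{i=1}^{|k|} B_{2l, -i + k(1+σ_k)/2})^{σ_k}, where O_{l,k} = [v^{2l}, u^k] = v^{2l} u^k v^{-2l} u^{-k}, B_{p,q} = v^p u^q B u^{-q} v^{-p}, and σ_k is the sign of k. -/
/-- The free group `F(u,v)` of rank 2. -/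
abbrev F : Type := FreeGroup Bool

/-- The generator `u`. -/
def u : F := FreeGroup.of true

/-- The generator `v`. -/
def v : F := FreeGroup.of false

/-- `B = u v u v⁻¹`. -/
def B : F := u * v * u * v⁻¹

/-- `B_{p,q} = v^p u^q B u^{-q} v^{-p}`. -/
def Bpq (p q : ℤ) : F := v ^ p * u ^ q * B * u ^ (-q) * v ^ (-p)

/-- `O_{l,k} = [v^{2l}, u^k]`. -/
def O (l k : ℤ) : F := v ^ (2 * l) * u ^ k * v ^ (-(2 * l)) * u ^ (-k)

lemma pos_prod (l : ℤ) (n : ℕ) :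
    ((List.range n).map (fun i : ℕ => Bpq (2 * l) (-((i : ℤ) + 1) + (n : ℤ)))).prod =
      v ^ (2 * l) * (u ^ (n : ℤ) * v * u ^ (n : ℤ) * v⁻¹) * v ^ (-(2 * l)) := by
  induction n with
  | zero => simp
  | succ n ih =>
    rw [List.range_succ_eq_map, List.map_cons, List.map_map, List.prod_cons]
    have h1 : ((fun i : ℕ => Bpq (2 * l) (-((i : ℤ) + 1) + ((n + 1 : ℕ) : ℤ))) ∘ Nat.succ) =
        fun i : ℕ => Bpq (2 * l) (-((i : ℤ) + 1) + (n : ℤ)) := by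
      funext i; simp only [Function.comp_apply]; congr 1; push_cast; ring
    have h0 : (-(((0 : ℕ) : ℤ) + 1) + ((n + 1 : ℕ) : ℤ)) = (n : ℤ) := by push_cast; ring
    rw [h1, h0, ih]
    simp only [Bpq, B]
    push_cast
    group

lemma neg_prod (l : ℤ) (n : ℕ) :
    ((List.range n).map (fun i : ℕ => Bpq (2 * l) (-((i : ℤ) + 1)))).prod =
      v ^ (2 * l) * (v * u ^ (n : ℤ) * v⁻¹ * u ^ (n : ℤ)) * v ^ (-(2 * l)) := by
  induction n with
  | zero => simp
  | succ n ih =>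
    rw [List.range_succ, List.map_append, List.prod_append, ih]
    simp only [List.map_cons, List.map_nil, List.prod_cons, List.prod_nil, Bpq, B]
    push_cast
    group

/-- For all nonzero integers `k` and `l`,
`Q_{k,l} = O_{l,k}⁻¹ · (∏_{i=1}^{|k|} B_{2l, -i + k(1+σ_k)/2})^{σ_k}`. -/
theorem Qkl_eq (k l : ℤ) (hk : k ≠ 0) (hl : l ≠ 0) :
    u ^ k * v ^ (2 * l + 1) * u ^ k * v ^ (-(2 * l + 1)) =
      (O l k)⁻¹ *
        (((List.range k.natAbs).map
          (fun i => Bpq (2 * l) (-((i : ℤ) + 1) + k * ((1 + k.sign) / 2)))).prod) ^ k.sign := by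
  simp only [bind_pure_comp, List.map_eq_map, List.map_map]
  rcases lt_or_gt_of_ne hk with h | h
  · -- k < 0
    obtain ⟨n, rfl⟩ : ∃ n : ℕ, k = -(n : ℤ) := ⟨k.natAbs, by omega⟩
    have hs : (-(n : ℤ)).sign = -1 := by
      rw [Int.sign_eq_neg_one_iff_neg]; omega
    have hna : (-(n : ℤ)).natAbs = n := by simp
    rw [hs, hna]
    have hf : ((fun i : ℤ => Bpq (2 * l) (-(i + 1) + -(n : ℤ) * ((1 + -1) / 2))) ∘
        (fun a : ℕ => (a : ℤ))) = fun i : ℕ => Bpq (2 * l) (-((i : ℤ) + 1)) := by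
      funext i; norm_num
    rw [hf, neg_prod, O]
    group
  · -- k > 0
    obtain ⟨n, rfl⟩ : ∃ n : ℕ, k = (n : ℤ) := ⟨k.natAbs, by omega⟩
    have hs : (n : ℤ).sign = 1 := by
      rw [Int.sign_eq_one_iff_pos]; omega
    have hna : (n : ℤ).natAbs = n := by simp
    rw [hs, hna]
    have hf : ((fun i : ℤ => Bpq (2 * l) (-(i + 1) + (n : ℤ) * ((1 + 1) / 2))) ∘
        (fun a : ℕ => (a : ℤ))) = fun i : ℕ => Bpq (2 * l) (-((i : ℤ) + 1) + (n : ℤ)) := by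
      funext i; norm_num
    rw [hf, pos_prod, O]
    group
end

section
/- The map θ : ℤ ⋊ ℤ → Aut(F(u,v)) determined by θ(m,n)(u) = B^{m-δₙ} u^{(-1)ⁿ} B^{-m+δₙ} and θ(m,n)(v) = B^m v u^{-2m} B^{-m+δₙ}, where B = uvuv⁻¹ and δₙ ∈ {0,1} is the parity of n, is a group homomorphism: θ((m,n)·(m',n')) = θ(m,n) ∘ θ(m',n'). -/
/-- `δₙ`: the parity of `n` (0 if even, 1 if odd). -/
def d (n : ℤ) : ℤ := if Even n then 0 else 1

/-- `εₙ = (-1)^n`. -/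
def eps (n : ℤ) : ℤ := (Int.negOnePow n : ℤˣ)

/-- The map `θ : ℤ ⋊ ℤ → End(F(u,v))` with
`θ(m,n)(u) = B^{m-δₙ} u^{εₙ} B^{-m+δₙ}` and `θ(m,n)(v) = B^m v u^{-2m} B^{-m+δₙ}`. -/
def θf (m n : ℤ) : F →* F :=
  FreeGroup.lift (fun x =>
    if x then B ^ (m - d n) * u ^ eps n * B ^ (-(m - d n))
    else B ^ m * v * u ^ (-(2 * m)) * B ^ (-m + d n))


lemma θu (m n : ℤ) : θf m n u = B ^ (m - d n) * u ^ eps n * B ^ (-(m - d n)) :=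
  FreeGroup.lift_apply_of

lemma θv (m n : ℤ) : θf m n v = B ^ m * v * u ^ (-(2 * m)) * B ^ (-m + d n) :=
  FreeGroup.lift_apply_of

lemma hB (m n : ℤ) : θf m n B = B ^ (m - d n) * u ^ eps n * B ^ (d n) * v * u ^ eps n * v⁻¹ * B ^ (-m) := by
  simp only [B, map_mul, map_inv, θu, θv]
  group

lemma d_even {n : ℤ} (h : Even n) : d n = 0 := if_pos h
lemma d_odd {n : ℤ} (h : Odd n) : d n = 1 := if_neg (Int.not_even_iff_odd.2 h)
lemma eps_even {n : ℤ} (h : Even n) : eps n = 1 := by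
  simp [eps, Int.negOnePow_even n h]
lemma eps_odd {n : ℤ} (h : Odd n) : eps n = -1 := by
  simp [eps, Int.negOnePow_odd n h]

lemma hB_even {n : ℤ} (m : ℤ) (h : Even n) : θf m n B = B := by
  rw [hB, d_even h, eps_even h]
  group
  rw [show (B:F) ^ m * u * v * u * v ^ (-1:ℤ) * B ^ (-m) = B ^ m * B * B ^ (-m) from by
    rw [B]; group]
  group

lemma hB_odd {n : ℤ} (m : ℤ) (h : Odd n) : θf m n B = B⁻¹ := by
  rw [hB, d_odd h, eps_odd h]
  rw [show (B:F) ^ (m-1) * u ^ (-1:ℤ) * B ^ (1:ℤ) * v * u ^ (-1:ℤ) * v⁻¹ * B ^ (-m)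
      = B ^ (m-1) * B ^ (-m) from by rw [B]; group]
  group

lemma key_u (m n m' n' : ℤ) :
    θf (m + eps n * m') (n + n') u = θf m n (θf m' n' u) := by
  rw [θu, θu, map_mul, map_mul, map_zpow, map_zpow, map_zpow, θu]
  rcases Int.even_or_odd n with h | h <;> rcases Int.even_or_odd n' with h' | h' <;>
    [ rw [hB_even m h, d_even h, d_even h', d_even (h.add h'), eps_even h, eps_even h',
        eps_even (h.add h')];
      rw [hB_even m h, d_even h, d_odd h', d_odd (h.add_odd h'), eps_even h, eps_odd h',
        eps_odd (h.add_odd h')];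
      rw [hB_odd m h, d_odd h, d_even h', d_odd (h.add_even h'), eps_odd h, eps_even h',
        eps_odd (h.add_even h')];
      rw [hB_odd m h, d_odd h, d_odd h', d_even (h.add_odd h'), eps_odd h, eps_odd h',
        eps_even (h.add_odd h')]] <;>
    group

lemma conjB (j k : ℤ) (x : F) : (B ^ j * x * B ^ (-j)) ^ k = B ^ j * x ^ k * B ^ (-j) := by
  rw [zpow_neg, conj_zpow]

lemma key_v (m n m' n' : ℤ) :
    θf (m + eps n * m') (n + n') v = θf m n (θf m' n' v) := by
  rw [θv, θv, map_mul, map_mul, map_mul, map_zpow, map_zpow, map_zpow, θu, θv]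
  rcases Int.even_or_odd n with h | h <;> rcases Int.even_or_odd n' with h' | h' <;>
    [ rw [hB_even m h, d_even h, d_even h', d_even (h.add h'), eps_even h];
      rw [hB_even m h, d_even h, d_odd h', d_odd (h.add_odd h'), eps_even h];
      rw [hB_odd m h, d_odd h, d_even h', d_odd (h.add_even h'), eps_odd h];
      rw [hB_odd m h, d_odd h, d_odd h', d_even (h.add_odd h'), eps_odd h]] <;>
    group <;>
    [ rw [conjB m]; rw [conjB m];
      rw [show (1 - m : ℤ) = -(-1 + m) by ring, conjB (-1 + m)];
      rw [show (1 - m : ℤ) = -(-1 + m) by ring, conjB (-1 + m)]] <;>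
    group

/-- `θ` is a homomorphism from `ℤ ⋊ ℤ` (with multiplication
`(m,n)(m',n') = (m + (-1)^n m', n + n')`) to `Aut(F(u,v))`:
`θ((m,n)·(m',n')) = θ(m,n) ∘ θ(m',n')`. -/
theorem theta_hom (m n m' n' : ℤ) :
    θf (m + eps n * m') (n + n') = (θf m n).comp (θf m' n') := by
  apply FreeGroup.ext_hom
  intro x
  cases x
  · exact key_v m n m' n'
  · exact key_u m n m' n'
end

section
/- In the free group F(u,v) with B = uvuv⁻¹, for every integer s the element a = v^{-4s-2}·x with x = v^{2s+2}(Bv²)^{-s-1} satisfies v^{-4s-2}·v^{2s+2}(Bv²)^{-s-1}·(uv)^{4s+2}·ρ·B = 1, where ρ = (uv)^{-2s-2}(B(uv)^{-2})^{-s-1}, i.e., v^{-2s}(uv)^{2s}·(uv)^{-2s-2}(B(uv)^{-2})^{-s-1}·B = 1. -/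
/-- For every integer `s`,
`v^{-4s-2} · v^{2s+2}(Bv²)^{-s-1} · (uv)^{4s+2} · (uv)^{-2s-2}(B(uv)^{-2})^{-s-1} · B = 1`. -/
theorem free_group_cancellation (s : ℤ) :
    v ^ (-4 * s - 2) * (v ^ (2 * s + 2) * (B * v ^ (2 : ℤ)) ^ (-s - 1)) *
        (u * v) ^ (4 * s + 2) *
        ((u * v) ^ (-2 * s - 2) * (B * (u * v) ^ (-2 : ℤ)) ^ (-s - 1)) * B = 1 := by
  have h1 : (B * v ^ (2:ℤ)) ^ (-s - 1) = ((u*v) ^ (2:ℤ)) ^ (-s - 1) := by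
    congr 1; simp only [B, zpow_two]; group
  have h2 : (B * (u*v) ^ (-2:ℤ)) ^ (-s - 1)
      = (u*v) ^ (2:ℤ) * (v ^ (-2:ℤ)) ^ (-s - 1) * ((u*v) ^ (2:ℤ))⁻¹ := by
    rw [show B * (u*v) ^ (-2:ℤ) = (u*v) ^ (2:ℤ) * v ^ (-2:ℤ) * ((u*v) ^ (2:ℤ))⁻¹ from by
      simp only [B, zpow_two, zpow_neg, mul_inv_rev]; group, conj_zpow]
  rw [h1, h2]
  simp only [B, ← zpow_mul]
  group
  simp only [zpow_two, zpow_neg, mul_inv_rev]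
  group
end
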